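/- Let H be a compact convex subset of the plane, a, b ∈ H a diametral pair, c and d points of H on the two supporting lines of H parallel to the line ab (on opposite sides). Then the convex quadrilateral J = conv{a, c, b, d} satisfies area(J) ≥ area(H)/2. -/

import Mathlib

/-!
Every point of `H` lies within `diam H = dist a b` of both `a` and `b`, so `H` lies in the
rectangle bounded by the two lines through `a` and `b` perpendicular to `ab` and by the two
supporting lines parallel to `ab`. The quadrilateral contains the triangles `abc` and `abd`, on
opposite sides of `ab`, each of area `|ab| · height / 2`; together they make up half of that
rectangle. Since the claim is invariant under linear maps, it is checked in the coordinates
`x ↦ (⟪b - a, x⟫, ⟪w, x⟫)`, in which the rectangle is an axis-parallel box.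
-/

open scoped RealInnerProductSpace
open MeasureTheory Set

lemma Convex.smul_add_smul_mem_of_zero_mem {𝕜 E : Type*} [Field 𝕜] [LinearOrder 𝕜]
    [IsStrictOrderedRing 𝕜] [AddCommGroup E] [Module 𝕜 E] {S : Set E} (hS : Convex 𝕜 S)
    (h0 : 0 ∈ S) {p q : E} (hp : p ∈ S) (hq : q ∈ S) {x y : 𝕜} (hx : 0 ≤ x)
    (hy : 0 ≤ y) (hxy : x + y ≤ 1) : x • p + y • q ∈ S := by
  simpa [Fin.sum_univ_three] using hS.sum_mem (t := Finset.univ) (w := ![1 - x - y, x, y])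
    (z := ![0, p, q]) (by simp [Fin.forall_fin_succ, hx, hy]; linarith)
    (by simp [Fin.sum_univ_three]; ring) (by simp [Fin.forall_fin_succ, h0, hp, hq])

lemma volume_regionBetween_zero_one_sub :
    volume (regionBetween 0 (fun x : ℝ => 1 - x) (Ioo 0 1)) = ENNReal.ofReal (1 / 2) := by
  rw [Measure.volume_eq_prod, volume_regionBetween_eq_integral (f := 0) (g := fun x : ℝ => 1 - x)
    (integrableOn_const (by simp) (by simp))
    ((continuous_const.sub continuous_id).integrableOn_Icc.mono_set Ioo_subset_Icc_self)
    measurableSet_Ioo (fun x hx => by simpa using hx.2.le),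
    ← integral_Ioc_eq_integral_Ioo, ← intervalIntegral.integral_of_le zero_le_one]
  simp only [Pi.sub_apply, Pi.zero_apply, sub_zero]
  rw [intervalIntegral.integral_sub intervalIntegrable_const intervalIntegral.intervalIntegrable_id]
  norm_num [integral_id]

lemma Convex.triangle_area_le_volume_inter {S : Set (ℝ × ℝ)} (hS : Convex ℝ S) (h0 : 0 ∈ S)
    {L s h : ℝ} (hL : 0 ≤ L) (hb : (L, 0) ∈ S) (hc : (s, h) ∈ S) :
    ENNReal.ofReal (L * |h| / 2) ≤ volume (S ∩ {p | 0 < p.2 * h}) := by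
  rcases eq_or_ne h 0 with rfl | hh
  · simp
  set T := regionBetween 0 (fun x : ℝ => 1 - x) (Ioo 0 1)
  set f : ℝ × ℝ →ₗ[ℝ] ℝ × ℝ :=
    (LinearMap.fst ℝ ℝ ℝ).smulRight (L, 0) + (LinearMap.snd ℝ ℝ ℝ).smulRight (s, h)
  have hdet : LinearMap.det f = L * h := by
    rw [← LinearMap.det_toMatrix (Module.Basis.finTwoProd ℝ), Matrix.det_fin_two]
    simp [f, LinearMap.toMatrix_apply]
  have hsub : f '' T ⊆ S ∩ {p | 0 < p.2 * h} := by
    rintro _ ⟨⟨x, y⟩, ⟨⟨hx, -⟩, hy, hxy⟩, rfl⟩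
    refine ⟨?_, ?_⟩
    · have hxy : x + y ≤ 1 := by linarith [show y < 1 - x from hxy]
      simpa [f] using hS.smul_add_smul_mem_of_zero_mem h0 hb hc hx.le hy.le hxy
    · simpa [f, mul_assoc] using mul_pos hy (mul_self_pos.2 hh)
  calc ENNReal.ofReal (L * |h| / 2) = ENNReal.ofReal |LinearMap.det f| * volume T := by
        rw [hdet, volume_regionBetween_zero_one_sub, ← ENNReal.ofReal_mul (abs_nonneg _), abs_mul,
          abs_of_nonneg hL]
        ring_nf
    _ = volume (f '' T) := (Measure.addHaar_image_linearMap _ _ _).symm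
    _ ≤ _ := measure_mono hsub

lemma Convex.quadrilateral_area_le_volume {S : Set (ℝ × ℝ)} (hS : Convex ℝ S) (h0 : 0 ∈ S)
    {L sc hc sd hd : ℝ} (hL : 0 ≤ L) (hc0 : 0 ≤ hc) (hd0 : hd ≤ 0)
    (hb : (L, 0) ∈ S) (hcS : (sc, hc) ∈ S) (hdS : (sd, hd) ∈ S) :
    ENNReal.ofReal (L * (hc - hd) / 2) ≤ volume S := by
  have hup := hS.triangle_area_le_volume_inter h0 hL hb hcS
  have hdown := hS.triangle_area_le_volume_inter h0 hL hb hdS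
  rw [abs_of_nonneg hc0] at hup
  rw [abs_of_nonpos hd0] at hdown
  have hpos : MeasurableSet {p : ℝ × ℝ | 0 < p.2} :=
    measurableSet_lt measurable_const measurable_snd
  calc ENNReal.ofReal (L * (hc - hd) / 2)
      = ENNReal.ofReal (L * hc / 2) + ENNReal.ofReal (L * -hd / 2) := by
        rw [← ENNReal.ofReal_add (by positivity) (by nlinarith)]
        ring_nf
    _ ≤ volume (S ∩ {p | 0 < p.2}) + volume (S \ {p | 0 < p.2}) := by
        gcongr
        · exact hup.trans <| measure_mono fun p ⟨hp, hp'⟩ =>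
            ⟨hp, pos_of_mul_pos_left hp' hc0⟩
        · exact hdown.trans <| measure_mono fun p ⟨hp, hp'⟩ =>
            ⟨hp, fun h => (mul_nonpos_of_nonneg_of_nonpos h.le hd0).not_gt hp'⟩
    _ = volume S := measure_inter_add_sdiff S hpos

theorem Convex.addHaar_Icc_prod_Icc_le_two_mul {μ : Measure (ℝ × ℝ)} [μ.IsAddHaarMeasure]
    {S : Set (ℝ × ℝ)} (hS : Convex ℝ S) {p q r s : ℝ × ℝ}
    (hp : p ∈ S) (hq : q ∈ S) (hr : r ∈ S) (hs : s ∈ S)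
    (hpq : p.1 ≤ q.1) (hqp : q.2 = p.2) (hsp : s.2 ≤ p.2) (hpr : p.2 ≤ r.2) :
    μ (Icc p.1 q.1 ×ˢ Icc s.2 r.2) ≤ 2 * μ S := by
  suffices volume (Icc p.1 q.1 ×ˢ Icc s.2 r.2) ≤ 2 * volume S by
    rw [Measure.isAddLeftInvariant_eq_smul μ volume]
    simp only [Measure.smul_apply, ENNReal.smul_def, smul_eq_mul]
    rw [mul_left_comm]
    gcongr
  have mem_translate : ∀ x ∈ S, x - p ∈ (p + ·) ⁻¹' S := fun x hx => by simpa using hx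
  have hq' : (q.1 - p.1, (0 : ℝ)) ∈ (p + ·) ⁻¹' S := by
    convert mem_translate q hq using 1
    ext <;> simp [hqp]
  have hquad := (hS.translate_preimage_right p).quadrilateral_area_le_volume (by simpa using hp)
    (sub_nonneg.2 hpq) (sub_nonneg.2 hpr) (sub_nonpos.2 hsp) hq' (mem_translate r hr)
    (mem_translate s hs)
  rw [← measure_preimage_add volume p S]
  calc volume (Icc p.1 q.1 ×ˢ Icc s.2 r.2)
      = 2 * ENNReal.ofReal ((q.1 - p.1) * (r.2 - p.2 - (s.2 - p.2)) / 2) := by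
        rw [Measure.volume_eq_prod, Measure.prod_prod, Real.volume_Icc, Real.volume_Icc,
          ← ENNReal.ofReal_mul (sub_nonneg.2 hpq), ← ENNReal.ofReal_ofNat 2,
          ← ENNReal.ofReal_mul zero_le_two]
        ring_nf
    _ ≤ _ := by gcongr

section InnerProductSpace

variable {E : Type*} [NormedAddCommGroup E] [InnerProductSpace ℝ E]

lemma inner_sub_le_inner_of_dist_le {a b x : E} (h : dist x b ≤ dist a b) :
    ⟪b - a, a⟫ ≤ ⟪b - a, x⟫ := by
  rw [dist_eq_norm, dist_eq_norm, norm_sub_rev a, ← sub_sub_sub_cancel_right x b a] at h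
  have hsq := norm_sub_sq_real (x - a) (b - a)
  have : ‖x - a - (b - a)‖ ^ 2 ≤ ‖b - a‖ ^ 2 := by gcongr
  rw [← sub_nonneg, ← inner_sub_right, real_inner_comm]
  nlinarith [sq_nonneg ‖x - a‖]

lemma inner_mem_Icc_of_dist_le {a b x : E} (ha : dist x a ≤ dist a b)
    (hb : dist x b ≤ dist a b) : ⟪b - a, x⟫ ∈ Icc ⟪b - a, a⟫ ⟪b - a, b⟫ := by
  refine ⟨inner_sub_le_inner_of_dist_le hb, ?_⟩
  have := inner_sub_le_inner_of_dist_le (a := b) (b := a) (dist_comm a b ▸ ha)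
  rwa [← neg_sub b a, inner_neg_left, inner_neg_left, neg_le_neg_iff] at this

lemma exists_continuousLinearEquiv_prod_inner [FiniteDimensional ℝ E]
    (hE : Module.finrank ℝ E = 2) {u w : E} (hu : u ≠ 0) (hw : w ≠ 0) (huw : ⟪u, w⟫ = 0) :
    ∃ Ψ : E ≃L[ℝ] ℝ × ℝ, ∀ x, Ψ x = (⟪u, x⟫, ⟪w, x⟫) := by
  have hli : LinearIndependent ℝ ![u, w] :=
    linearIndependent_of_ne_zero_of_inner_eq_zero (by simp [Fin.forall_fin_two, hu, hw])
      fun i j hij => by fin_cases i <;> fin_cases j <;> simp_all [real_inner_comm u w]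
  set B := basisOfLinearIndependentOfCardEqFinrank hli (by simp [hE])
  let f := (innerₛₗ ℝ u).prod (innerₛₗ ℝ w)
  have hf : Function.Injective f := by
    refine (injective_iff_map_eq_zero f).2 fun x hx =>
      InnerProductSpace.ext_inner_left_basis B fun i => ?_
    fin_cases i <;> simp_all [B, f, Prod.ext_iff]
  exact ⟨(f.linearEquivOfInjective hf (by simp [hE])).toContinuousLinearEquiv, fun x => rfl⟩

theorem addHaar_le_two_mul_addHaar_convexHull_of_diametral [FiniteDimensional ℝ E]
    [MeasurableSpace E] [BorelSpace E] (hE : Module.finrank ℝ E = 2) (μ : Measure E)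
    [μ.IsAddHaarMeasure] {H : Set E} {a b c d w : E} (hab : a ≠ b) (ha : a ∈ H) (hb : b ∈ H)
    (hdiam : ∀ x ∈ H, ∀ y ∈ H, dist x y ≤ dist a b) (hw0 : w ≠ 0) (hw : ⟪w, b - a⟫ = 0)
    (hcsup : ∀ y ∈ H, ⟪y, w⟫ ≤ ⟪c, w⟫) (hdsup : ∀ y ∈ H, ⟪d, w⟫ ≤ ⟪y, w⟫) :
    μ H ≤ 2 * μ (convexHull ℝ {a, c, b, d}) := by
  obtain ⟨Ψ, hΨ⟩ := exists_continuousLinearEquiv_prod_inner hE (sub_ne_zero.2 hab.symm) hw0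
    (by rwa [real_inner_comm])
  set J := convexHull ℝ {a, c, b, d}
  set box := Icc (Ψ a).1 (Ψ b).1 ×ˢ Icc (Ψ d).2 (Ψ c).2
  have hbox : H ⊆ Ψ ⁻¹' box := fun x hx => by
    simp only [box, mem_preimage, mem_prod, mem_Icc, hΨ, real_inner_comm _ w]
    exact ⟨inner_mem_Icc_of_dist_le (hdiam x hx a ha) (hdiam x hx b hb), hdsup x hx, hcsup x hx⟩
  have hJ : ∀ x ∈ ({a, c, b, d} : Set E), Ψ x ∈ Ψ.symm ⁻¹' J := fun x hx => by
    simpa using subset_convexHull ℝ _ hx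
  obtain ⟨⟨-, hab₁⟩, hda₂, hac₂⟩ := hbox ha
  have hba₂ : (Ψ b).2 = (Ψ a).2 := by
    rw [hΨ, hΨ]
    rwa [inner_sub_right, sub_eq_zero] at hw
  have hquad := ((convex_convexHull ℝ _).linear_preimage Ψ.symm.toLinearMap)
    |>.addHaar_Icc_prod_Icc_le_two_mul (μ := μ.map Ψ) (hJ a (by simp)) (hJ b (by simp))
      (hJ c (by simp)) (hJ d (by simp)) hab₁ hba₂ hda₂ hac₂
  have hΨe : MeasurableEmbedding Ψ := Ψ.toHomeomorph.measurableEmbedding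
  calc μ H ≤ μ (Ψ ⁻¹' box) := measure_mono hbox
    _ ≤ 2 * μ.map Ψ (Ψ.symm ⁻¹' J) := by rwa [← hΨe.map_apply]
    _ = 2 * μ J := by rw [hΨe.map_apply, Ψ.preimage_symm_preimage]

end InnerProductSpace

theorem inscribed_quadrilateral_area_general (H : Set (EuclideanSpace ℝ (Fin 2)))
    (hHc : IsCompact H)
    (a b c d : EuclideanSpace ℝ (Fin 2))
    (ha : a ∈ H) (hb : b ∈ H)
    (hdiam : dist a b = Metric.diam H)
    (w : EuclideanSpace ℝ (Fin 2)) (hw0 : w ≠ 0) (hw : ⟪w, b - a⟫ = 0)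
    (hcsup : ∀ y ∈ H, ⟪y, w⟫ ≤ ⟪c, w⟫)
    (hdsup : ∀ y ∈ H, ⟪d, w⟫ ≤ ⟪y, w⟫) :
    (volume H).toReal / 2 ≤ (volume (convexHull ℝ {a, c, b, d})).toReal := by
  have hdist : ∀ x ∈ H, ∀ y ∈ H, dist x y ≤ dist a b := fun x hx y hy =>
    hdiam ▸ Metric.dist_le_diam_of_mem hHc.isBounded hx hy
  rcases eq_or_ne a b with rfl | hab
  · have hH : H ⊆ {a} := fun x hx => dist_le_zero.1 (by simpa using hdist x hx a ha)
    simp [measure_mono_null hH (measure_singleton a)]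
  have hHJ := addHaar_le_two_mul_addHaar_convexHull_of_diametral finrank_euclideanSpace_fin
    volume hab ha hb hdist hw0 hw hcsup hdsup
  have hJfin : volume (convexHull ℝ {a, c, b, d}) ≠ ⊤ :=
    ((toFinite _).isCompact_convexHull (𝕜 := ℝ)).measure_ne_top
  have := ENNReal.toReal_mono (ENNReal.mul_ne_top ENNReal.ofNat_ne_top hJfin) hHJ
  rw [ENNReal.toReal_mul, ENNReal.toReal_ofNat] at this
  linarith

/-- Let `H` be compact convex in the plane with diametral pair `a, b`, and let
`c, d ∈ H` lie on the two supporting lines of `H` parallel to line `ab` (on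
opposite sides); here `w` is a nonzero vector perpendicular to `b - a`.  Then
the inscribed quadrilateral `J = conv{a, c, b, d}` has area at least half the
area of `H`. -/
theorem inscribed_quadrilateral_area (H : Set (EuclideanSpace ℝ (Fin 2)))
    (hHc : IsCompact H) (hHconv : Convex ℝ H)
    (a b c d : EuclideanSpace ℝ (Fin 2))
    (ha : a ∈ H) (hb : b ∈ H) (hc : c ∈ H) (hd : d ∈ H)
    (hdiam : dist a b = Metric.diam H)
    (w : EuclideanSpace ℝ (Fin 2)) (hw0 : w ≠ 0) (hw : ⟪w, b - a⟫ = 0)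
    (hcsup : ∀ y ∈ H, ⟪y, w⟫ ≤ ⟪c, w⟫)
    (hdsup : ∀ y ∈ H, ⟪d, w⟫ ≤ ⟪y, w⟫) :
    (volume H).toReal / 2 ≤ (volume (convexHull ℝ {a, c, b, d})).toReal :=
  inscribed_quadrilateral_area_general H hHc a b c d ha hb hdiam w hw0 hw hcsup hdsup
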